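/- Let (E, ℛ, τ) satisfy conditions (i), (ii), (iii). Then E(E,ℛ) is a subsemigroup of the idempotents of ℤ[E×]: every element of E(E,ℛ) is an idempotent of ℤ[E×], and for all x, y ∈ E(E,ℛ) the product x·y again lies in E(E,ℛ). -/

import Mathlib

set_option linter.unusedSectionVars false

/-- A *semilattice with zero*: a commutative idempotent semigroup with an
absorbing element `0`. -/
class SemilatticeWithZero (E : Type) extends CommSemigroup E, Zero E where
  mul_idem : ∀ e : E, e * e = e
  zero_mul : ∀ e : E, 0 * e = 0

namespace IndRes

variable {E : Type} [SemilatticeWithZero E]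

/-- `single e c`, viewed in the semigroup algebra `ℤ[E]`. -/
noncomputable def sgl (e : E) (c : ℤ) : MonoidAlgebra ℤ E := MonoidAlgebra.single e c

/-- Truncation map deleting the coefficient at `0`. -/
noncomputable def T (x : MonoidAlgebra ℤ E) : MonoidAlgebra ℤ E := x - sgl 0 (x.coeff 0)

lemma sgl_apply_self (e : E) (c : ℤ) : (sgl e c).coeff e = c := Finsupp.single_eq_same

lemma sgl_apply_ne (e d : E) (c : ℤ) (h : e ≠ d) : (sgl e c).coeff d = 0 := Finsupp.single_eq_of_ne h.symm

lemma sgl_add (e : E) (c d : ℤ) : sgl e (c + d) = sgl e c + sgl e d := MonoidAlgebra.single_add e c d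

lemma sgl_sub (e : E) (c d : ℤ) : sgl e (c - d) = sgl e c - sgl e d := MonoidAlgebra.single_sub e c d

lemma T_apply_zero (x : MonoidAlgebra ℤ E) : (T x).coeff 0 = 0 := by
  show ((x - sgl 0 (x.coeff 0) : MonoidAlgebra ℤ E)).coeff 0 = 0
  rw [MonoidAlgebra.coeff_sub, Finsupp.sub_apply, sgl_apply_self, sub_self]

/-- `ℤ[E^×]`, realized as the additive subgroup of the semigroup algebra
`ℤ[E]` consisting of the elements whose coefficient at `0` vanishes; it is the free
`ℤ`-module with basis `E^× = E \ {0}`. -/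
noncomputable def ZS (E : Type) [SemilatticeWithZero E] : AddSubgroup (MonoidAlgebra ℤ E) where
  carrier := {x | x.coeff 0 = 0}
  zero_mem' := rfl
  add_mem' := by
    intro a b ha hb
    simp only [Set.mem_setOf_eq] at *
    rw [MonoidAlgebra.coeff_add, Finsupp.add_apply, ha, hb, add_zero]
  neg_mem' := by
    intro a ha
    simp only [Set.mem_setOf_eq] at *
    rw [MonoidAlgebra.coeff_neg, Finsupp.neg_apply, ha, neg_zero]

/-- The integral semigroup ring `ℤ[E^×]`. -/
abbrev ZE (E : Type) [SemilatticeWithZero E] : Type := ↥(ZS E)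

lemma mem_ZS {x : MonoidAlgebra ℤ E} : x ∈ ZS E ↔ x.coeff 0 = 0 := Iff.rfl

lemma T_eq_self {x : MonoidAlgebra ℤ E} (h : x.coeff 0 = 0) : T x = x := by
  simp [T, h, sgl]

lemma T_add (a b : MonoidAlgebra ℤ E) : T (a + b) = T a + T b := by
  unfold T
  rw [show ((a + b).coeff 0) = a.coeff 0 + b.coeff 0 from by
    rw [MonoidAlgebra.coeff_add, Finsupp.add_apply], sgl_add]
  abel

lemma T_sub_sgl (x : MonoidAlgebra ℤ E) (m : ℤ) : T (x - sgl 0 m) = T x := by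
  unfold T
  have h : ((x - sgl 0 m : MonoidAlgebra ℤ E)).coeff 0 = x.coeff 0 - m := by
    rw [MonoidAlgebra.coeff_sub, Finsupp.sub_apply, sgl_apply_self]
  rw [h, sgl_sub]
  abel

lemma single_zero_mul (c : ℤ) (b : MonoidAlgebra ℤ E) :
    (sgl 0 c) * b = sgl 0 (((sgl 0 c * b : MonoidAlgebra ℤ E)).coeff 0) := by
  classical
  ext d
  by_cases hd : d = 0
  · subst hd; rw [sgl_apply_self]
  · rw [sgl_apply_ne 0 d _ (Ne.symm hd)]
    by_contra h
    have hmem : d ∈ ((sgl (0:E) c) * b).coeff.support := Finsupp.mem_support_iff.mpr h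
    have h2 := MonoidAlgebra.support_coeff_mul_subset (sgl (0:E) c) b hmem
    rw [Finset.mem_mul] at h2
    obtain ⟨a, ha, b', _, hab⟩ := h2
    have ha' : a = 0 := by
      have := Finsupp.support_single_subset (ha : a ∈ (Finsupp.single (0:E) c).support)
      simpa using this
    exact hd (by rw [← hab, ha', SemilatticeWithZero.zero_mul])

lemma T_mul_left (a b : MonoidAlgebra ℤ E) : T (T a * b) = T (a * b) := by
  have h1 : T a * b = a * b - (sgl 0 (a.coeff 0)) * b := by rw [T, sub_mul]
  rw [h1, single_zero_mul, T_sub_sgl]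

lemma T_mul_right (a b : MonoidAlgebra ℤ E) : T (a * T b) = T (a * b) := by
  rw [mul_comm a (T b), T_mul_left, mul_comm]

noncomputable instance : Mul (ZE E) :=
  ⟨fun x y => ⟨T (x.1 * y.1), T_apply_zero _⟩⟩

lemma ZE.val_mul (x y : ZE E) : (x * y).1 = T (x.1 * y.1) := rfl

noncomputable instance : NonUnitalCommRing (ZE E) :=
  { (inferInstance : AddCommGroup (ZE E)) with
    mul := (· * ·)
    left_distrib := by
      intro x y z
      apply Subtype.ext
      show T (x.1 * (y.1 + z.1)) = T (x.1 * y.1) + T (x.1 * z.1)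
      rw [mul_add, T_add]
    right_distrib := by
      intro x y z
      apply Subtype.ext
      show T ((x.1 + y.1) * z.1) = T (x.1 * z.1) + T (y.1 * z.1)
      rw [add_mul, T_add]
    zero_mul := by
      intro x
      apply Subtype.ext
      show T ((0 : MonoidAlgebra ℤ E) * x.1) = 0
      rw [zero_mul]
      simp [T, sgl]
    mul_zero := by
      intro x
      apply Subtype.ext
      show T (x.1 * (0 : MonoidAlgebra ℤ E)) = 0
      rw [mul_zero]
      simp [T, sgl]
    mul_assoc := by
      intro x y z
      apply Subtype.ext
      show T (T (x.1 * y.1) * z.1) = T (x.1 * T (y.1 * z.1))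
      rw [T_mul_left, T_mul_right, mul_assoc]
    mul_comm := by
      intro x y
      apply Subtype.ext
      show T (x.1 * y.1) = T (y.1 * x.1)
      rw [mul_comm] }

/-- The canonical image of `e ∈ E` in `ℤ[E^×]`: the basis element `e` if `e ≠ 0`,
and `0` if `e = 0`. -/
noncomputable def elt (e : E) : ZE E := ⟨T (sgl e 1), T_apply_zero _⟩

/-- Product of a (nonempty) finite family in a commutative non-unital ring, computed inside
the unitization.  For a nonempty index set this is the iterated product. -/
noncomputable def nprod {ι A : Type} [NonUnitalCommRing A] (s : Finset ι) (f : ι → A) : A :=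
  (∏ j ∈ s, (Unitization.inr (f j) : Unitization ℤ A)).snd

/-- The join `⋁_{j ∈ J} x_j = ∑_{∅ ≠ J' ⊆ J} (-1)^{|J'|+1} ∏_{j ∈ J'} x_j`
of a finite family of idempotents of a commutative non-unital ring. -/
noncomputable def rjoin {ι A : Type} [NonUnitalCommRing A] (s : Finset ι) (f : ι → A) : A :=
  ∑ t ∈ s.powerset.filter (fun t => t.Nonempty), ((-1 : ℤ) ^ (t.card + 1)) • nprod t f

/-- The join `⋁_{j ∈ J} e_j ∈ ℤ[E^×]` of a finite family of elements of `E`: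
`∑_{∅ ≠ J' ⊆ J} (-1)^{|J'|+1} ∏_{j ∈ J'} e_j`, where a product whose value in `E`
is `0` contributes `0`. -/
noncomputable def join {ι : Type} (s : Finset ι) (e : ι → E) : ZE E :=
  rjoin s (fun j => elt (e j))

/-- Iterated product of a nonempty list in a semigroup with zero (the value on the
empty list is the junk value `0`). -/
def listProd : List E → E
  | [] => 0
  | [a] => a
  | a :: b :: l => a * listProd (b :: l)

/-- The product `∏_{j ∈ s} f j ∈ E` of a (nonempty) finite family. -/
noncomputable def eprod {ι : Type} (s : Finset ι) (f : ι → E) : E :=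
  listProd (s.toList.map f)

/-- The support `E(x)` of `x ∈ ℤ[E^×]`: the finite set of elements of `E^×` appearing
with a nonzero coefficient in the reduced form of `x`. -/
noncomputable def supp (x : ZE E) : Finset E := x.1.coeff.support

section Action

variable {Γ : Type} [Group Γ] [MulAction Γ E]

/-- The induced action of `g ∈ Γ` on `ℤ[E^×]`: the `ℤ`-linear map sending a basis
element `e ∈ E^×` to `g • e`.  (When the action fixes `0` — which is the case for an
action by semigroup automorphisms fixing `0` — the truncation `T` is a no-op, and this
is the automorphism of `ℤ[E^×]` induced by `τ_g`.) -/
noncomputable def act (g : Γ) (x : ZE E) : ZE E :=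
  ⟨T (MonoidAlgebra.ofCoeff (Finsupp.mapDomain (fun e : E => g • e) x.1.coeff)), T_apply_zero _⟩

end Action



attribute [local instance] Classical.propDecidable

variable {E : Type} [SemilatticeWithZero E]

/-- A Γ-semilattice structure: the group acts by semigroup automorphisms fixing `0`. -/
def IsGammaSL (Γ E : Type) [Group Γ] [SemilatticeWithZero E] [MulAction Γ E] : Prop :=
  (∀ (g : Γ) (x y : E), g • (x * y) = (g • x) * (g • y)) ∧ (∀ g : Γ, g • (0 : E) = 0)

/-- The set `E_φ`. -/
def Ephi {D : Type} [NonUnitalCommRing D] (φ : ZE E →ₙ+* D) : Set (ZE E) :=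
  { x | ∃ (e : E) (J : Finset E), e ≠ 0 ∧ (∀ f ∈ J, f ≠ 0 ∧ f * e = f ∧ f ≠ e) ∧
      x = elt e - join J (fun f => f) ∧
      φ (elt e) = rjoin J (fun f => φ (elt f)) }

/-- `R` is a finite cover for `e ∈ E^×`. -/
def IsCover (e : E) (R : Finset E) : Prop :=
  (∀ f ∈ R, f ≠ 0 ∧ f * e = f) ∧
  ∀ f' : E, f' ≠ 0 → f' * e = f' → ∃ f ∈ R, f' * f ≠ 0

/-- `ℛ` is a collection of finite covers for `E`. -/
def CovSystem (ℛ : E → Set (Finset E)) : Prop :=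
  ∀ e : E, e ≠ 0 → ∀ R ∈ ℛ e, IsCover e R

/-- Condition (i). -/
def CondI (ℛ : E → Set (Finset E)) : Prop :=
  ∀ d e : E, d ≠ 0 → e ≠ 0 → d * e ≠ 0 → ∀ R ∈ ℛ e,
    d * e ∈ (R.image (fun f => d * f)).erase 0 ∨ (R.image (fun f => d * f)).erase 0 ∈ ℛ (d * e)

/-- Condition (ii). -/
def CondII (ℛ : E → Set (Finset E)) : Prop :=
  ∀ e : E, e ≠ 0 → ∀ r : ℕ, 0 < r → ∀ Rs : Fin r → Finset E,
    Function.Injective Rs → (∀ i, Rs i ∈ ℛ e) → ∀ ε : Fin r → E,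
    (∀ i, ε i ∈ supp (join (Rs i) (fun f => f))) → ∀ j : Fin r,
      (if r = 1 then e else eprod (Finset.univ.erase j) ε) ≠ 0 →
      eprod Finset.univ ε * (if r = 1 then e else eprod (Finset.univ.erase j) ε)
          = eprod Finset.univ ε ∧
      eprod Finset.univ ε ≠ (if r = 1 then e else eprod (Finset.univ.erase j) ε)

/-- Condition (iii). -/
def CondIII (Γ : Type) [Group Γ] [MulAction Γ E] (ℛ : E → Set (Finset E)) : Prop :=
  ∀ (g : Γ) (e : E), e ≠ 0 →
    (fun R : Finset E => R.image (fun f => g • f)) '' (ℛ e) = ℛ (g • e)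

/-- `e(𝒮) = ∏_{R ∈ 𝒮} (e - ⋁R) ∈ ℤ[E^×]`. -/
noncomputable def eS (e : E) (S : Finset (Finset E)) : ZE E :=
  nprod S (fun R => elt e - join R (fun f => f))

/-- `E(E,ℛ) = {e(𝒮) : e ∈ E^×, 𝒮 ⊆ ℛ(e) nonempty finite} ∪ {0} ⊆ ℤ[E^×]`. -/
def EER (ℛ : E → Set (Finset E)) : Set (ZE E) :=
  {x | ∃ (e : E) (S : Finset (Finset E)), e ≠ 0 ∧ S.Nonempty ∧ ↑S ⊆ ℛ e ∧ x = eS e S} ∪ {0}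

/-- `R(𝒮,R̃) = {e(𝒮 ∪ {R̃})} ∪ {f ⬝ e(𝒮) : f ∈ R̃, f ⬝ e(𝒮) ≠ 0}`. -/
noncomputable def RSR (e : E) (S : Finset (Finset E)) (Rt : Finset E) : Finset (ZE E) :=
  insert (eS e (insert Rt S)) ((Rt.image (fun f => elt f * eS e S)).erase 0)

/-- The collection of finite covers `ℛ(E,ℛ)` on `E(E,ℛ)`, assigning to an element
`x = e(𝒮)` of `E(E,ℛ)^×` the covers `R(𝒮,R̃)`, `R̃ ∈ ℛ(e) ∖ 𝒮` (over all ways of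
presenting `x` in the form `e(𝒮)`). -/
def RER (ℛ : E → Set (Finset E)) (x : ZE E) : Set (Finset (ZE E)) :=
  {C | ∃ (e : E) (S : Finset (Finset E)) (Rt : Finset E),
        e ≠ 0 ∧ S.Nonempty ∧ ↑S ⊆ ℛ e ∧ Rt ∈ ℛ e ∧ Rt ∉ S ∧ x = eS e S ∧ C = RSR e S Rt}

/-- The `ℤ`-linear map `ℤ[E₁^×] → ℤ[E₂^×]` induced by a map `θ` from `E₁` to `ℤ[E₂^×]`,
sending a basis element `e' ∈ E₁^×` to `θ e'`. -/
noncomputable def indMap {E₁ E₂ : Type} [SemilatticeWithZero E₁] [SemilatticeWithZero E₂]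
    (θ : E₁ → ZE E₂) : ZE E₁ →ₗ[ℤ] ZE E₂ :=
  (Finsupp.linearCombination ℤ θ).comp
    ((MonoidAlgebra.coeffLinearEquiv ℤ).toLinearMap.comp ((ZS E₁).subtype.toIntLinearMap))

/-- `(E₁, ℛ₁, θ)` is a realization of the construction `(E(E,ℛ), ℛ(E,ℛ))`:
`θ` identifies the abstract Γ-semilattice `E₁` with `E(E,ℛ) ⊆ ℤ[E^×]` (equivariantly,
multiplicatively and preserving `0`), and `ℛ₁` corresponds to `ℛ(E,ℛ)` under this
identification. -/
def Realizes {Γ E E₁ : Type} [Group Γ] [SemilatticeWithZero E] [MulAction Γ E]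
    [SemilatticeWithZero E₁] [MulAction Γ E₁]
    (ℛ : E → Set (Finset E)) (ℛ₁ : E₁ → Set (Finset E₁)) (θ : E₁ → ZE E) : Prop :=
  Function.Injective θ ∧ Set.range θ = EER ℛ ∧ θ 0 = 0 ∧
  (∀ x y : E₁, θ (x * y) = θ x * θ y) ∧
  (∀ (g : Γ) (x : E₁), θ (g • x) = act g (θ x)) ∧
  (∀ e' : E₁, e' ≠ 0 → ∀ C : Finset E₁, C ∈ ℛ₁ e' ↔ C.image θ ∈ RER ℛ (θ e'))

end IndRes

open IndRes

/-
For a cover `R` of `e`, `⋁R` is an idempotent below `e`; hence `e - ⋁R`, and with it `e(𝒮)`, is an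
idempotent absorbed by `e`. So `e(𝒮) d(𝒯) = (d e(𝒮)) (e d(𝒯))`, and `d (e - ⋁R) = de - ⋁(d·R)^×`
shows that this is `(de)(𝒮')` for the family `𝒮'` of the covers `(d·R)^×`, `(e·R')^×`. It vanishes
if `de = 0` or if `de` lies in a member of `𝒮'`; otherwise condition (i) puts `𝒮'` inside `ℛ(de)`.

Identities in `ℤ[E^×]` are checked in its unitization, where `⋁R = 1 - ∏_{f ∈ R} (1 - f)`.
-/

namespace Finset

variable {M ι κ : Type*} [CommMonoid M] {s t : Finset ι} {f : ι → M}

theorem isIdempotentElem_prod (h : ∀ j ∈ s, IsIdempotentElem (f j)) :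
    IsIdempotentElem (∏ j ∈ s, f j) :=
  prod_induction f _ (fun _ _ => IsIdempotentElem.mul) IsIdempotentElem.one h

theorem prod_comp_of_isIdempotentElem [DecidableEq κ] (g : κ → M) (c : ι → κ)
    (h : ∀ b ∈ s.image c, IsIdempotentElem (g b)) :
    ∏ j ∈ s, g (c j) = ∏ b ∈ s.image c, g b := by
  rw [prod_comp]
  refine prod_congr rfl fun b hb => (h b hb).pow_eq ?_
  obtain ⟨j, hj, rfl⟩ := mem_image.mp hb
  exact card_ne_zero.mpr ⟨j, mem_filter.mpr ⟨hj, rfl⟩⟩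

theorem prod_mul_prod_of_isIdempotentElem [DecidableEq ι]
    (h : ∀ j ∈ s ∪ t, IsIdempotentElem (f j)) :
    (∏ j ∈ s, f j) * ∏ j ∈ t, f j = ∏ j ∈ s ∪ t, f j := by
  have hinter : IsIdempotentElem (∏ j ∈ s ∩ t, f j) :=
    isIdempotentElem_prod fun j hj => h j (inter_subset_union hj)
  rw [← prod_union_inter, ← prod_sdiff (inter_subset_union : s ∩ t ⊆ s ∪ t), mul_assoc,
    hinter.eq]

theorem prod_one_sub_mul_of_isIdempotentElem {R : Type*} [CommRing R] {p : R}
    (hp : IsIdempotentElem p) (s : Finset ι) (q : ι → R) :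
    ∏ j ∈ s, (1 - p * q j) = 1 - p + p * ∏ j ∈ s, (1 - q j) := by
  classical
  induction s using Finset.induction_on with
  | empty => simp
  | insert a s ha ih =>
    rw [prod_insert ha, prod_insert ha, ih]
    linear_combination (q a - q a * ∏ j ∈ s, (1 - q j)) * hp.eq

end Finset

namespace IndRes

open Finset

section NonUnital

variable {ι κ A : Type} [NonUnitalCommRing A] {s t : Finset ι} {f g : ι → A}

/- Unification does not find the commutative ring structure of `Unitization ℤ A` from its
multiplication, so lemmas about commutative monoids and rings are applied with the type given. -/
local notation "𝒰" => Unitization ℤ A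

theorem coe_nprod (hs : s.Nonempty) : ((nprod s f : A) : 𝒰) = ∏ j ∈ s, (f j : 𝒰) := by
  refine Unitization.ext ?_ rfl
  obtain ⟨j, hj⟩ := hs
  have hfst : (∏ j ∈ s, (f j : 𝒰)).fst = ∏ j ∈ s, (f j : 𝒰).fst :=
    map_prod (Unitization.fstHom ℤ A).toMonoidHom _ s
  rw [Unitization.fst_inr, hfst, prod_eq_zero hj (Unitization.fst_inr ℤ (f j))]

theorem nprod_congr (h : ∀ j ∈ s, f j = g j) : nprod s f = nprod s g :=
  congrArg (fun u : 𝒰 => u.snd) (prod_congr rfl fun j hj => by rw [h j hj])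

theorem nprod_eq_zero {j : ι} (hj : j ∈ s) (h : f j = 0) : nprod s f = 0 := by
  rw [nprod, prod_eq_zero (f := fun j => (f j : 𝒰)) hj (by rw [h, Unitization.inr_zero]),
    Unitization.snd_zero]

theorem isIdempotentElem_nprod (hs : s.Nonempty) (h : ∀ j ∈ s, IsIdempotentElem (f j)) :
    IsIdempotentElem (nprod s f) := by
  rw [← Unitization.isIdempotentElem_inr_iff ℤ, coe_nprod hs]
  exact isIdempotentElem_prod (M := 𝒰) fun j hj => Unitization.IsIdempotentElem.inr ℤ (h j hj)

theorem mul_nprod_of_isIdempotentElem {p : A} (hp : IsIdempotentElem p) (hs : s.Nonempty) :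
    p * nprod s f = nprod s (fun j => p * f j) := by
  apply Unitization.inr_injective (R := ℤ)
  simp_rw [Unitization.inr_mul, coe_nprod hs, Unitization.inr_mul, prod_mul_distrib, prod_const,
    IsIdempotentElem.pow_eq (M := 𝒰) (Unitization.IsIdempotentElem.inr ℤ hp) hs.card_ne_zero]

theorem nprod_comp_of_isIdempotentElem [DecidableEq κ] (hs : s.Nonempty) (v : κ → A) (c : ι → κ)
    (h : ∀ b ∈ s.image c, IsIdempotentElem (v b)) :
    nprod s (fun j => v (c j)) = nprod (s.image c) v := by
  apply Unitization.inr_injective (R := ℤ)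
  rw [coe_nprod hs, coe_nprod (hs.image c)]
  exact prod_comp_of_isIdempotentElem (M := 𝒰) _ c
    fun b hb => Unitization.IsIdempotentElem.inr ℤ (h b hb)

theorem nprod_mul_nprod_of_isIdempotentElem [DecidableEq ι] (hs : s.Nonempty) (ht : t.Nonempty)
    (h : ∀ j ∈ s ∪ t, IsIdempotentElem (f j)) : nprod s f * nprod t f = nprod (s ∪ t) f := by
  apply Unitization.inr_injective (R := ℤ)
  rw [Unitization.inr_mul, coe_nprod hs, coe_nprod ht, coe_nprod (hs.mono subset_union_left)]
  exact prod_mul_prod_of_isIdempotentElem (M := 𝒰)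
    fun j hj => Unitization.IsIdempotentElem.inr ℤ (h j hj)

theorem coe_rjoin : ((rjoin s f : A) : 𝒰) = 1 - ∏ j ∈ s, (1 - (f j : 𝒰)) := by
  classical
  have hempty : s.powerset.filter (fun t => ¬ t.Nonempty) = {∅} := by
    ext t
    simp only [mem_filter, mem_powerset, not_nonempty_iff_eq_empty, mem_singleton]
    exact ⟨And.right, fun ht => ⟨ht ▸ empty_subset s, ht⟩⟩
  have hcoe : ∀ t ∈ s.powerset.filter (fun t => t.Nonempty),
      ((((-1 : ℤ) ^ (#t + 1)) • nprod t f : A) : 𝒰) = -((-1) ^ #t * ∏ j ∈ t, (f j : 𝒰)) := by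
    intro t ht
    rw [Unitization.inr_smul, coe_nprod (mem_filter.mp ht).2, zsmul_eq_mul,
      Int.cast_pow (R := 𝒰), Int.cast_neg, Int.cast_one]
    ring
  have hsum : ((rjoin s f : A) : 𝒰) = ∑ t ∈ s.powerset.filter (fun t => t.Nonempty),
      ((((-1 : ℤ) ^ (#t + 1)) • nprod t f : A) : 𝒰) :=
    map_sum (Unitization.inrNonUnitalAlgHom ℤ A) _ _
  rw [hsum, sum_congr rfl hcoe, prod_sub (fun _ => 1) (fun j => (f j : 𝒰))]
  conv_rhs => rw [← sum_filter_add_sum_filter_not _ (fun t => t.Nonempty), hempty, sum_singleton]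
  simp only [prod_const_one, mul_one, card_empty, pow_zero, prod_empty, sum_neg_distrib]
  ring

theorem rjoin_congr (h : ∀ j ∈ s, f j = g j) : rjoin s f = rjoin s g := by
  apply Unitization.inr_injective (R := ℤ)
  rw [coe_rjoin, coe_rjoin, prod_congr rfl fun j hj => by rw [h j hj]]

theorem isIdempotentElem_rjoin (h : ∀ j ∈ s, IsIdempotentElem (f j)) :
    IsIdempotentElem (rjoin s f) := by
  rw [← Unitization.isIdempotentElem_inr_iff ℤ, coe_rjoin]
  exact (isIdempotentElem_prod (M := 𝒰)
    fun j hj => (Unitization.IsIdempotentElem.inr ℤ (h j hj)).one_sub).one_sub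

theorem mul_rjoin_of_isIdempotentElem {p : A} (hp : IsIdempotentElem p) :
    p * rjoin s f = rjoin s (fun j => p * f j) := by
  apply Unitization.inr_injective (R := ℤ)
  simp_rw [Unitization.inr_mul, coe_rjoin, Unitization.inr_mul,
    prod_one_sub_mul_of_isIdempotentElem (R := 𝒰) (Unitization.IsIdempotentElem.inr ℤ hp)]
  ring

theorem rjoin_comp_of_isIdempotentElem [DecidableEq κ] (v : κ → A) (c : ι → κ)
    (h : ∀ b ∈ s.image c, IsIdempotentElem (v b)) :
    rjoin s (fun j => v (c j)) = rjoin (s.image c) v := by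
  apply Unitization.inr_injective (R := ℤ)
  rw [coe_rjoin, coe_rjoin, prod_comp_of_isIdempotentElem (M := 𝒰) (fun b => 1 - (v b : 𝒰)) c
    fun b hb => (Unitization.IsIdempotentElem.inr ℤ (h b hb)).one_sub]

theorem rjoin_erase [DecidableEq ι] {a : ι} (h : f a = 0) : rjoin (s.erase a) f = rjoin s f := by
  apply Unitization.inr_injective (R := ℤ)
  rw [coe_rjoin, coe_rjoin, prod_erase _ (by rw [h, Unitization.inr_zero, sub_zero])]

theorem rjoin_eq_of_mem {a : ι} (ha : a ∈ s) (hfa : IsIdempotentElem (f a))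
    (h : ∀ j ∈ s, f j * f a = f j) : rjoin s f = f a := by
  classical
  apply Unitization.inr_injective (R := ℤ)
  have hfa' := Unitization.IsIdempotentElem.inr ℤ hfa
  have hprod : ∏ j ∈ s, (1 - (f j : 𝒰)) = 1 - f a + f a * ∏ j ∈ s, (1 - (f j : 𝒰)) := by
    rw [← prod_one_sub_mul_of_isIdempotentElem (R := 𝒰) hfa']
    refine prod_congr rfl fun j hj => ?_
    rw [← Unitization.inr_mul, mul_comm, h j hj]
  have hzero : (f a : 𝒰) * ∏ j ∈ s, (1 - (f j : 𝒰)) = 0 := by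
    rw [← mul_prod_erase s _ ha, ← mul_assoc, IsIdempotentElem.mul_one_sub_self (R := 𝒰) hfa',
      zero_mul]
  rw [coe_rjoin, hprod, hzero]
  ring

end NonUnital

variable {E : Type} [SemilatticeWithZero E] {ι : Type} {d e u : E} {R C : Finset E}

theorem elt_zero : elt (0 : E) = 0 :=
  Subtype.ext <| sub_eq_zero.mpr <| by rw [sgl_apply_self]

theorem elt_mul (d e : E) : elt d * elt e = elt (d * e) := by
  apply Subtype.ext
  show T (T (sgl d 1) * T (sgl e 1)) = T (sgl (d * e) 1)
  rw [T_mul_left, T_mul_right, sgl, sgl, sgl, MonoidAlgebra.single_mul_single, one_mul]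

theorem isIdempotentElem_elt (e : E) : IsIdempotentElem (elt e) := by
  rw [IsIdempotentElem, elt_mul, SemilatticeWithZero.mul_idem]

theorem elt_mul_join (d : E) (s : Finset ι) (c : ι → E) :
    elt d * join s c = join s (fun j => d * c j) := by
  simp_rw [join, mul_rjoin_of_isIdempotentElem (isIdempotentElem_elt d), elt_mul]

theorem join_eq_join_image_erase_zero [DecidableEq E] (s : Finset ι) (c : ι → E) :
    join s c = join ((s.image c).erase 0) fun f => f := by
  rw [join, join, rjoin_erase elt_zero,
    rjoin_comp_of_isIdempotentElem _ _ fun f _ => isIdempotentElem_elt f]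

theorem elt_mul_join_of_le (h : ∀ f ∈ R, f * e = f) :
    elt e * join R (fun f => f) = join R (fun f => f) := by
  rw [elt_mul_join]
  exact rjoin_congr fun f hf => congrArg elt ((mul_comm e f).trans (h f hf))

theorem isIdempotentElem_elt_sub_join (h : ∀ f ∈ R, f * e = f) :
    IsIdempotentElem (elt e - join R fun f => f) :=
  (isIdempotentElem_rjoin fun f _ => isIdempotentElem_elt f).sub (isIdempotentElem_elt e)
    ((mul_comm _ _).trans (elt_mul_join_of_le h)) (elt_mul_join_of_le h)

theorem join_eq_elt_of_mem (hu : u ∈ C) (h : ∀ g ∈ C, g * u = g) :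
    join C (fun f => f) = elt u :=
  rjoin_eq_of_mem hu (isIdempotentElem_elt u) fun g hg => by rw [elt_mul, h g hg]

/-- The paper's `(d·R)^×`. -/
def smulCover [DecidableEq E] (d : E) (R : Finset E) : Finset E :=
  (R.image fun f => d * f).erase 0

theorem smulCover_le [DecidableEq E] (h : ∀ f ∈ R, f * e = f) :
    ∀ g ∈ smulCover d R, g * (d * e) = g := by
  intro g hg
  obtain ⟨f, hf, rfl⟩ := mem_image.mp (mem_of_mem_erase hg)
  rw [mul_mul_mul_comm, SemilatticeWithZero.mul_idem, h f hf]

theorem elt_mul_elt_sub_join [DecidableEq E] (d e : E) (R : Finset E) :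
    elt d * (elt e - join R fun f => f) = elt (d * e) - join (smulCover d R) fun f => f := by
  rw [mul_sub, elt_mul, elt_mul_join, join_eq_join_image_erase_zero]
  rfl

variable {𝒮 𝒯 : Finset (Finset E)}

theorem isIdempotentElem_eS (h𝒮 : 𝒮.Nonempty) (h : ∀ R ∈ 𝒮, ∀ f ∈ R, f * e = f) :
    IsIdempotentElem (eS e 𝒮) :=
  isIdempotentElem_nprod h𝒮 fun R hR => isIdempotentElem_elt_sub_join (h R hR)

theorem elt_mul_eS_self (h𝒮 : 𝒮.Nonempty) (h : ∀ R ∈ 𝒮, ∀ f ∈ R, f * e = f) :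
    elt e * eS e 𝒮 = eS e 𝒮 := by
  rw [eS, mul_nprod_of_isIdempotentElem (isIdempotentElem_elt e) h𝒮]
  exact nprod_congr fun R hR => by
    rw [mul_sub, (isIdempotentElem_elt e).eq, elt_mul_join_of_le (h R hR)]

theorem elt_mul_eS [DecidableEq E] (h𝒮 : 𝒮.Nonempty) (d : E) :
    elt d * eS e 𝒮 = nprod 𝒮 fun R => elt (d * e) - join (smulCover d R) fun f => f := by
  rw [eS, mul_nprod_of_isIdempotentElem (isIdempotentElem_elt d) h𝒮]
  exact nprod_congr fun R _ => elt_mul_elt_sub_join d e R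

theorem eS_mul_eS_of_mul_eq_zero (h𝒮 : 𝒮.Nonempty) (h𝒯 : 𝒯.Nonempty)
    (h𝒮e : ∀ R ∈ 𝒮, ∀ f ∈ R, f * e = f) (h𝒯d : ∀ R ∈ 𝒯, ∀ f ∈ R, f * d = f) (hde : d * e = 0) :
    eS e 𝒮 * eS d 𝒯 = 0 := by
  rw [← elt_mul_eS_self h𝒮 h𝒮e, ← elt_mul_eS_self h𝒯 h𝒯d, mul_mul_mul_comm, elt_mul, mul_comm e d,
    hde, elt_zero, zero_mul]

theorem le_of_mem_union_image_smulCover [DecidableEq E]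
    (h𝒮e : ∀ R ∈ 𝒮, ∀ f ∈ R, f * e = f) (h𝒯d : ∀ R ∈ 𝒯, ∀ f ∈ R, f * d = f)
    (hC : C ∈ 𝒮.image (smulCover d) ∪ 𝒯.image (smulCover e)) : ∀ g ∈ C, g * (d * e) = g := by
  rcases mem_union.mp hC with hC | hC <;> obtain ⟨R, hR, rfl⟩ := mem_image.mp hC
  · exact smulCover_le (h𝒮e R hR)
  · rw [mul_comm d e]
    exact smulCover_le (h𝒯d R hR)

theorem eS_mul_eS [DecidableEq E] (h𝒮 : 𝒮.Nonempty) (h𝒯 : 𝒯.Nonempty)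
    (h𝒮e : ∀ R ∈ 𝒮, ∀ f ∈ R, f * e = f) (h𝒯d : ∀ R ∈ 𝒯, ∀ f ∈ R, f * d = f) :
    eS e 𝒮 * eS d 𝒯 = eS (d * e) (𝒮.image (smulCover d) ∪ 𝒯.image (smulCover e)) := by
  have hidem : ∀ C ∈ 𝒮.image (smulCover d) ∪ 𝒯.image (smulCover e),
      IsIdempotentElem (elt (d * e) - join C fun f => f) := fun C hC =>
    isIdempotentElem_elt_sub_join (le_of_mem_union_image_smulCover h𝒮e h𝒯d hC)
  calc eS e 𝒮 * eS d 𝒯 = (elt d * eS e 𝒮) * (elt e * eS d 𝒯) := by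
        rw [mul_mul_mul_comm, mul_comm (elt d) (elt e), ← mul_mul_mul_comm,
          elt_mul_eS_self h𝒮 h𝒮e, elt_mul_eS_self h𝒯 h𝒯d]
    _ = nprod (𝒮.image (smulCover d)) (fun C => elt (d * e) - join C fun f => f) *
          nprod (𝒯.image (smulCover e)) (fun C => elt (d * e) - join C fun f => f) := by
        rw [elt_mul_eS h𝒮, elt_mul_eS h𝒯, mul_comm e d,
          nprod_comp_of_isIdempotentElem h𝒮 _ _ fun C hC => hidem C (mem_union_left _ hC),
          nprod_comp_of_isIdempotentElem h𝒯 _ _ fun C hC => hidem C (mem_union_right _ hC)]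
    _ = _ := nprod_mul_nprod_of_isIdempotentElem (h𝒮.image _) (h𝒯.image _) hidem

theorem eS_eq_zero_of_mem {𝒞 : Finset (Finset E)} (hC : C ∈ 𝒞) (hu : u ∈ C)
    (h : ∀ g ∈ C, g * u = g) : eS u 𝒞 = 0 :=
  nprod_eq_zero hC (by rw [join_eq_elt_of_mem hu h, sub_self])

variable {ℛ : E → Set (Finset E)}

theorem CovSystem.mul_eq_of_mem (hcov : CovSystem ℛ) (he : e ≠ 0) (h𝒮 : ↑𝒮 ⊆ ℛ e) :
    ∀ R ∈ 𝒮, ∀ f ∈ R, f * e = f :=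
  fun R hR f hf => ((hcov e he R (h𝒮 hR)).1 f hf).2

theorem eS_mul_eS_mem_EER (hcov : CovSystem ℛ) (h1 : CondI ℛ) (he : e ≠ 0) (h𝒮 : 𝒮.Nonempty)
    (h𝒮R : ↑𝒮 ⊆ ℛ e) (hd : d ≠ 0) (h𝒯 : 𝒯.Nonempty) (h𝒯R : ↑𝒯 ⊆ ℛ d) :
    eS e 𝒮 * eS d 𝒯 ∈ EER ℛ := by
  classical
  have h𝒮e := hcov.mul_eq_of_mem he h𝒮R
  have h𝒯d := hcov.mul_eq_of_mem hd h𝒯R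
  by_cases hde : d * e = 0
  · exact Or.inr (eS_mul_eS_of_mul_eq_zero h𝒮 h𝒯 h𝒮e h𝒯d hde)
  rw [eS_mul_eS h𝒮 h𝒯 h𝒮e h𝒯d]
  by_cases htop : ∃ C ∈ 𝒮.image (smulCover d) ∪ 𝒯.image (smulCover e), d * e ∈ C
  · obtain ⟨C, hC, hdeC⟩ := htop
    exact Or.inr (eS_eq_zero_of_mem hC hdeC (le_of_mem_union_image_smulCover h𝒮e h𝒯d hC))
  refine Or.inl ⟨d * e, _, hde, (h𝒮.image _).mono subset_union_left, fun C hC => ?_, rfl⟩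
  rcases mem_union.mp hC with hC' | hC' <;> obtain ⟨R, hR, rfl⟩ := mem_image.mp hC'
  · exact (h1 d e hd he hde R (h𝒮R hR)).resolve_left fun hdeC => htop ⟨_, hC, hdeC⟩
  · rw [mul_comm d e] at hde htop ⊢
    exact (h1 e d he hd hde R (h𝒯R hR)).resolve_left fun hdeC => htop ⟨_, hC, hdeC⟩

end IndRes

theorem statement_9_general {E : Type} [SemilatticeWithZero E] (ℛ : E → Set (Finset E))
    (hcov : CovSystem ℛ) (h1 : CondI ℛ) :
    (∀ x ∈ EER ℛ, x * x = x) ∧ (∀ x ∈ EER ℛ, ∀ y ∈ EER ℛ, x * y ∈ EER ℛ) := by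
  refine ⟨?_, ?_⟩
  · rintro x (⟨e, 𝒮, he, h𝒮, h𝒮R, rfl⟩ | rfl)
    · exact isIdempotentElem_eS h𝒮 (hcov.mul_eq_of_mem he h𝒮R)
    · exact mul_zero 0
  · rintro x (⟨e, 𝒮, he, h𝒮, h𝒮R, rfl⟩ | rfl) y (⟨d, 𝒯, hd, h𝒯, h𝒯R, rfl⟩ | rfl)
    · exact eS_mul_eS_mem_EER hcov h1 he h𝒮 h𝒮R hd h𝒯 h𝒯R
    · exact Or.inr (mul_zero _)
    · exact Or.inr (zero_mul _)
    · exact Or.inr (zero_mul _)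

theorem statement_9 {E Γ : Type} [SemilatticeWithZero E] [Group Γ] [MulAction Γ E]
    (hact : IsGammaSL Γ E) (ℛ : E → Set (Finset E))
    (hcov : CovSystem ℛ) (h1 : CondI ℛ) (h2 : CondII ℛ) (h3 : CondIII Γ ℛ) :
    (∀ x ∈ EER ℛ, x * x = x) ∧ (∀ x ∈ EER ℛ, ∀ y ∈ EER ℛ, x * y ∈ EER ℛ) :=
  statement_9_general ℛ hcov h1
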